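/- arXiv:2104.04350 — 9 statements merged into one kernel-verified Lean document; each statement's English description precedes it below -/
import Mathlib

section
/- Let H be a Hilbert space, T ∈ B(H), a, c > 0, and let E ∈ B(H) be an idempotent with ‖TE‖ ≤ a and ‖T(I−E)ξ‖ ≥ c‖ξ‖ for all ξ in the range of I−E. Let F be the orthogonal projection onto the orthogonal complement of the closure of the range of T(I−E). Then ‖T*F‖ ≤ a and ‖T*(I−F)β‖ ≥ c‖β‖ for all β in the range of I−F. -/
/-!
`F` kills `Ran T(I-E)`, so `FT = FTE` and `‖T*F‖ = ‖FT‖ ≤ ‖TE‖`. The range of `I - F` is the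
closure of `T(Ran(I-E))`; for `β` there, `c |⟨β, Tη⟩| ≤ ‖T*β‖ ‖Tη‖` for `η ∈ Ran(I-E)` by the
lower bound, and passing to the limit `Tη → β` gives `c ‖β‖² ≤ ‖T*β‖ ‖β‖`.
-/

open scoped InnerProductSpace

namespace ContinuousLinearMap

variable {𝕜 E G : Type*} [RCLike 𝕜] [NormedAddCommGroup E] [InnerProductSpace 𝕜 E]
  [NormedAddCommGroup G] [InnerProductSpace 𝕜 G]

theorem ker_eq_topologicalClosure_of_range_eq_orthogonal [CompleteSpace E] {F : E →L[𝕜] E}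
    (hF : IsSelfAdjoint F) {S : Submodule 𝕜 E}
    (hrange : LinearMap.range (F : E →ₗ[𝕜] E) = S.topologicalClosureᗮ) :
    LinearMap.ker (F : E →ₗ[𝕜] E) = S.topologicalClosure := by
  rw [← Submodule.orthogonal_orthogonal_eq_closure, ← Submodule.orthogonal_closure S, ← hrange,
    orthogonal_range, hF.adjoint_eq]

theorem mul_norm_le_norm_adjoint_apply_of_mem_closure [CompleteSpace E] [CompleteSpace G]
    {T : E →L[𝕜] G} {V : Submodule 𝕜 E} {c : ℝ} (hc : 0 ≤ c)
    (hlow : ∀ v ∈ V, c * ‖v‖ ≤ ‖T v‖) {β : G}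
    (hβ : β ∈ (V.map (T : E →ₗ[𝕜] G)).topologicalClosure) :
    c * ‖β‖ ≤ ‖adjoint T β‖ := by
  have key : ∀ x ∈ closure (V.map (T : E →ₗ[𝕜] G) : Set G),
      c * ‖⟪β, x⟫_𝕜‖ ≤ ‖adjoint T β‖ * ‖x‖ := by
    refine closure_minimal (t := {x | c * ‖⟪β, x⟫_𝕜‖ ≤ ‖adjoint T β‖ * ‖x‖}) ?_
      (isClosed_le (by fun_prop) (by fun_prop))
    rintro _ ⟨v, hv, rfl⟩
    calc c * ‖⟪β, T v⟫_𝕜‖ = c * ‖⟪adjoint T β, v⟫_𝕜‖ := by rw [adjoint_inner_left]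
      _ ≤ c * (‖adjoint T β‖ * ‖v‖) := by gcongr; exact norm_inner_le_norm _ _
      _ = ‖adjoint T β‖ * (c * ‖v‖) := by ring
      _ ≤ ‖adjoint T β‖ * ‖T v‖ := by gcongr; exact hlow v hv
  have hβsq : c * ‖β‖ * ‖β‖ ≤ ‖adjoint T β‖ * ‖β‖ := by
    simpa [inner_self_eq_norm_sq_to_K, sq, mul_assoc] using key β hβ
  rcases (norm_nonneg β).eq_or_lt with hβ0 | hβpos
  · rw [← hβ0, mul_zero]; exact norm_nonneg _
  · exact le_of_mul_le_mul_right hβsq hβpos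

end ContinuousLinearMap

open ContinuousLinearMap in
theorem stmt6_general {H : Type*} [NormedAddCommGroup H] [InnerProductSpace ℂ H]
    [CompleteSpace H] (T E F : H →L[ℂ] H) (a c : ℝ) (hc : 0 < c)
    (hTE : ‖T * E‖ ≤ a)
    (hlow : ∀ ξ ∈ LinearMap.range ((1 - E : H →L[ℂ] H) : H →ₗ[ℂ] H), c * ‖ξ‖ ≤ ‖T ξ‖)
    (hF1 : IsIdempotentElem F) (hF2 : IsSelfAdjoint F)
    (hFrange : LinearMap.range (F : H →ₗ[ℂ] H)
      = ((LinearMap.range ((T * (1 - E) : H →L[ℂ] H) : H →ₗ[ℂ] H)).topologicalClosure)ᗮ) :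
    ‖adjoint T * F‖ ≤ a ∧
      ∀ β ∈ LinearMap.range ((1 - F : H →L[ℂ] H) : H →ₗ[ℂ] H), c * ‖β‖ ≤ ‖adjoint T β‖ := by
  have hker := ker_eq_topologicalClosure_of_range_eq_orthogonal hF2 hFrange
  have hFT : F * T = F * (T * E) := by
    have hFTE : F * (T * (1 - E)) = 0 := by
      ext x
      exact hker.ge (Submodule.le_topologicalClosure _ (LinearMap.mem_range_self _ x))
    rwa [mul_sub, mul_one, mul_sub, sub_eq_zero] at hFTE
  constructor
  · calc ‖adjoint T * F‖ = ‖star (F * T)‖ := by rw [star_mul, hF2.star_eq, star_eq_adjoint]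
      _ = ‖F * (T * E)‖ := by rw [norm_star, hFT]
      _ ≤ ‖F‖ * ‖T * E‖ := norm_mul_le _ _
      _ ≤ a := (mul_le_of_le_one_left (norm_nonneg _)
          (IsStarProjection.norm_le F ⟨hF1, hF2⟩)).trans hTE
  · intro β hβ
    rw [toLinearMap_sub, toLinearMap_one,
      ← LinearMap.IsIdempotentElem.ker_eq_range_one_sub hF1.toLinearMap, hker] at hβ
    refine mul_norm_le_norm_adjoint_apply_of_mem_closure hc.le hlow ?_
    rwa [← LinearMap.range_comp]

open ContinuousLinearMap in
/-- If `E` is an idempotent with `‖TE‖ ≤ a` and `T(I-E)` bounded below by `c` on the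
range of `I - E`, and `F` is the orthogonal projection onto the orthogonal complement
of `closure (Ran T(I-E))`, then `‖T*F‖ ≤ a` and `T*` is bounded below by `c` on the
range of `I - F`. -/
theorem stmt6 {H : Type*} [NormedAddCommGroup H] [InnerProductSpace ℂ H]
    [CompleteSpace H] (T E F : H →L[ℂ] H) (a c : ℝ) (ha : 0 < a) (hc : 0 < c)
    (hE : IsIdempotentElem E) (hTE : ‖T * E‖ ≤ a)
    (hlow : ∀ ξ ∈ LinearMap.range ((1 - E : H →L[ℂ] H) : H →ₗ[ℂ] H), c * ‖ξ‖ ≤ ‖T ξ‖)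
    (hF1 : IsIdempotentElem F) (hF2 : IsSelfAdjoint F)
    (hFrange : LinearMap.range (F : H →ₗ[ℂ] H)
      = ((LinearMap.range ((T * (1 - E) : H →L[ℂ] H) : H →ₗ[ℂ] H)).topologicalClosure)ᗮ) :
    ‖adjoint T * F‖ ≤ a ∧
      ∀ β ∈ LinearMap.range ((1 - F : H →L[ℂ] H) : H →ₗ[ℂ] H), c * ‖β‖ ≤ ‖adjoint T β‖ :=
  stmt6_general T E F a c hc hTE hlow hF1 hF2 hFrange
end

section
/- Let E and F be orthogonal projections on a Hilbert space H with F ∧ (I − E) = 0 (i.e., the ranges of F and I−E intersect only in 0). Then F is Murray–von Neumann subequivalent to E in B(H); equivalently, there is a partial isometry V ∈ B(H) with V*V = F and VV* ≤ E. In particular, if E has finite rank then F has finite rank with rank F ≤ rank E. -/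
/-!
With `T = E * F`, the hypothesis says exactly that `ker T = ker F`. The partial isometry comes
from the polar decomposition of `T`: since `‖|T| x‖ = ‖T x‖`, the map `|T| x ↦ T x` is a
well-defined isometry on the range of `|T|`; it extends to the closure of that range, which is
`(ker |T|)ᗮ = (ker F)ᗮ = range F`, and by `0` on its orthogonal complement. Its final space lies
in the closure of `range T ⊆ range E`. For the rank bound, `E` is injective on `range F`.
-/

open ContinuousLinearMap

section IsometricExtension

variable {𝕜 G H K : Type*} [NontriviallyNormedField 𝕜] [AddCommGroup G] [Module 𝕜 G]
  [NormedAddCommGroup H] [NormedSpace 𝕜 H] [NormedAddCommGroup K] [NormedSpace 𝕜 K]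

def LinearMap.rangeClosureRestrict (S : G →ₗ[𝕜] H) :
    G →ₗ[𝕜] (LinearMap.range S).topologicalClosure :=
  S.codRestrict _ fun x ↦ (LinearMap.range S).le_topologicalClosure (LinearMap.mem_range_self S x)

theorem LinearMap.denseRange_rangeClosureRestrict (S : G →ₗ[𝕜] H) :
    DenseRange S.rangeClosureRestrict := by
  rw [DenseRange, Subtype.dense_iff, ← Set.range_comp]
  exact (Submodule.topologicalClosure_coe _).subset

theorem exists_linearIsometry_rangeClosure_of_norm_apply_eq [CompleteSpace K]
    {S : G →ₗ[𝕜] H} {T : G →ₗ[𝕜] K} (h : ∀ x, ‖S x‖ = ‖T x‖) :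
    ∃ g : (LinearMap.range S).topologicalClosure →ₗᵢ[𝕜] K,
      ∀ y, g y ∈ (LinearMap.range T).topologicalClosure := by
  have hdense := S.denseRange_rangeClosureRestrict
  set g := T.extendOfNorm S.rangeClosureRestrict
  have hg : ∀ x, g (S.rangeClosureRestrict x) = T x :=
    LinearMap.extendOfNorm_eq hdense ⟨1, fun x ↦ by rw [one_mul, ← h]; rfl⟩
  refine ⟨⟨g.toLinearMap, fun y ↦ ?_⟩, fun y ↦ ?_⟩
  · refine hdense.induction_on y (isClosed_eq g.continuous.norm continuous_norm) fun x ↦ ?_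
    change ‖g _‖ = ‖S x‖
    rw [hg, h]
  · refine hdense.induction_on y
      ((Submodule.isClosed_topologicalClosure _).preimage g.continuous) fun x ↦ ?_
    simpa [hg] using (LinearMap.range T).le_topologicalClosure (LinearMap.mem_range_self T x)

end IsometricExtension

section PartialIsometry

variable {𝕜 G H K : Type*} [RCLike 𝕜] [AddCommGroup G] [Module 𝕜 G]
  [NormedAddCommGroup H] [InnerProductSpace 𝕜 H]
  [NormedAddCommGroup K] [InnerProductSpace 𝕜 K]

theorem exists_partialIsometry_of_norm_apply_eq [CompleteSpace H] [CompleteSpace K]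
    {S : G →ₗ[𝕜] H} {T : G →ₗ[𝕜] K} (h : ∀ x, ‖S x‖ = ‖T x‖) :
    ∃ V : H →L[𝕜] K,
      adjoint V ∘L V = (LinearMap.range S).topologicalClosure.starProjection ∧
      LinearMap.range (V : H →ₗ[𝕜] K) ≤ (LinearMap.range T).topologicalClosure := by
  set M := (LinearMap.range S).topologicalClosure
  obtain ⟨g, hg⟩ := exists_linearIsometry_rangeClosure_of_norm_apply_eq h
  refine ⟨g.toContinuousLinearMap ∘L M.orthogonalProjectionOnto, ?_, ?_⟩
  · have hgg : adjoint g.toContinuousLinearMap ∘L g.toContinuousLinearMap = 1 :=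
      (norm_map_iff_adjoint_comp_self _).mp g.norm_map
    rw [adjoint_comp, M.adjoint_orthogonalProjectionOnto, comp_assoc, ← comp_assoc (adjoint _),
      hgg, one_def, id_comp]
    rfl
  · rintro _ ⟨x, rfl⟩
    exact hg _

end PartialIsometry

theorem LinearMap.ker_comp_eq_of_disjoint {R M N P : Type*} [Semiring R] [AddCommMonoid M]
    [AddCommMonoid N] [AddCommMonoid P] [Module R M] [Module R N] [Module R P]
    {f : M →ₗ[R] N} {g : N →ₗ[R] P} (h : Disjoint (LinearMap.range f) (LinearMap.ker g)) :
    LinearMap.ker (g ∘ₗ f) = LinearMap.ker f := by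
  ext x
  refine ⟨fun hx ↦ ?_, fun hx ↦ by simp_all⟩
  exact h.le_bot ⟨LinearMap.mem_range_self f x, hx⟩

theorem LinearMap.finiteDimensional_and_finrank_le_of_disjoint_ker {K V W : Type*} [DivisionRing K]
    [AddCommGroup V] [Module K V] [AddCommGroup W] [Module K W] {f : V →ₗ[K] W}
    {p : Submodule K V} (h : Disjoint p (LinearMap.ker f))
    [FiniteDimensional K (LinearMap.range f)] :
    FiniteDimensional K p ∧ Module.finrank K p ≤ Module.finrank K (LinearMap.range f) := by
  set r := f.restrict (p := p) (q := LinearMap.range f) fun x _ ↦ LinearMap.mem_range_self f x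
  have hr : Function.Injective r := by
    rw [injective_iff_map_eq_zero]
    exact fun x hx ↦ Subtype.ext (LinearMap.disjoint_ker.mp h x x.2 (congrArg Subtype.val hx))
  exact ⟨.of_injective r hr, LinearMap.finrank_le_finrank_of_injective hr⟩

section SelfAdjoint

variable {𝕜 H : Type*} [RCLike 𝕜] [NormedAddCommGroup H] [InnerProductSpace 𝕜 H]
  [CompleteSpace H]

theorem IsSelfAdjoint.topologicalClosure_range {A : H →L[𝕜] H} (hA : IsSelfAdjoint A) :
    (LinearMap.range (A : H →ₗ[𝕜] H)).topologicalClosure =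
      (LinearMap.ker (A : H →ₗ[𝕜] H))ᗮ := by
  rw [orthogonal_ker, hA.adjoint_eq]

theorem IsSelfAdjoint.starProjection_topologicalClosure_range {A P : H →L[𝕜] H}
    (hA : IsSelfAdjoint A) (hP : IsStarProjection P)
    (h : LinearMap.ker (A : H →ₗ[𝕜] H) = LinearMap.ker (P : H →ₗ[𝕜] H)) :
    (LinearMap.range (A : H →ₗ[𝕜] H)).topologicalClosure.starProjection = P := by
  refine IsStarProjection.ext isStarProjection_starProjection hP ?_
  rw [Submodule.range_starProjection, hA.topologicalClosure_range, h,
    ← hP.isSelfAdjoint.topologicalClosure_range,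
    hP.isIdempotentElem.isClosed_range.submodule_topologicalClosure_eq]

end SelfAdjoint

section CFCAbs

variable {H : Type*} [NormedAddCommGroup H] [InnerProductSpace ℂ H] [CompleteSpace H]

theorem ContinuousLinearMap.norm_cfcAbs_apply (T : H →L[ℂ] H) (x : H) :
    ‖CFC.abs T x‖ = ‖T x‖ := by
  have habs : adjoint (CFC.abs T) ∘L CFC.abs T = adjoint T ∘L T := by
    rw [(CFC.abs_nonneg T).isSelfAdjoint.adjoint_eq, ← mul_def, CFC.abs_mul_abs, star_eq_adjoint,
      mul_def]
  rw [← sq_eq_sq₀ (norm_nonneg _) (norm_nonneg _), apply_norm_sq_eq_inner_adjoint_left, habs,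
    ← apply_norm_sq_eq_inner_adjoint_left]

theorem ContinuousLinearMap.ker_cfcAbs (T : H →L[ℂ] H) :
    LinearMap.ker ((CFC.abs T : H →L[ℂ] H) : H →ₗ[ℂ] H) =
      LinearMap.ker (T : H →ₗ[ℂ] H) := by
  ext x
  rw [LinearMap.mem_ker, LinearMap.mem_ker, ← norm_eq_zero, coe_coe, norm_cfcAbs_apply,
    norm_eq_zero, coe_coe]

end CFCAbs

open ContinuousLinearMap in
theorem stmt7_general {H : Type*} [NormedAddCommGroup H] [InnerProductSpace ℂ H]
    [CompleteSpace H] (E F : H →L[ℂ] H)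
    (hE1 : IsIdempotentElem E)
    (hF1 : IsIdempotentElem F) (hF2 : IsSelfAdjoint F)
    (h : LinearMap.range (F : H →ₗ[ℂ] H) ⊓ LinearMap.range ((1 - E : H →L[ℂ] H) : H →ₗ[ℂ] H) = ⊥) :
    (∃ V : H →L[ℂ] H, adjoint V * V = F ∧ IsIdempotentElem (V * adjoint V) ∧
        LinearMap.range ((V * adjoint V : H →L[ℂ] H) : H →ₗ[ℂ] H) ≤ LinearMap.range (E : H →ₗ[ℂ] H)) ∧
      (FiniteDimensional ℂ ↥(LinearMap.range (E : H →ₗ[ℂ] H)) →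
        FiniteDimensional ℂ ↥(LinearMap.range (F : H →ₗ[ℂ] H)) ∧
          Module.finrank ℂ ↥(LinearMap.range (F : H →ₗ[ℂ] H))
            ≤ Module.finrank ℂ ↥(LinearMap.range (E : H →ₗ[ℂ] H))) := by
  have hdisj :
      Disjoint (LinearMap.range (F : H →ₗ[ℂ] H)) (LinearMap.ker (E : H →ₗ[ℂ] H)) := by
    rwa [LinearMap.IsIdempotentElem.ker_eq_range_one_sub hE1.toLinearMap, disjoint_iff]
  refine ⟨?_, fun _ ↦ LinearMap.finiteDimensional_and_finrank_le_of_disjoint_ker hdisj⟩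
  have hker : LinearMap.ker ((CFC.abs (E * F) : H →L[ℂ] H) : H →ₗ[ℂ] H) =
      LinearMap.ker (F : H →ₗ[ℂ] H) :=
    (ker_cfcAbs _).trans (LinearMap.ker_comp_eq_of_disjoint hdisj)
  obtain ⟨V, hV, hVrange⟩ := exists_partialIsometry_of_norm_apply_eq
    (S := ((CFC.abs (E * F) : H →L[ℂ] H) : H →ₗ[ℂ] H))
    (T := ((E * F : H →L[ℂ] H) : H →ₗ[ℂ] H))
    (norm_cfcAbs_apply _)
  have hVV : adjoint V * V = F := by
    rw [mul_def, hV]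
    exact (CFC.abs_nonneg _).isSelfAdjoint.starProjection_topologicalClosure_range
      ⟨hF1, hF2⟩ hker
  refine ⟨V, hVV, ?_, ?_⟩
  · rw [← star_eq_adjoint, ← isIdempotentElem_star_mul_self_iff_isIdempotentElem_self_mul_star,
      star_eq_adjoint, hVV]
    exact hF1
  · calc LinearMap.range ((V * adjoint V : H →L[ℂ] H) : H →ₗ[ℂ] H)
        ≤ LinearMap.range (V : H →ₗ[ℂ] H) := LinearMap.range_comp_le_range _ _
      _ ≤ (LinearMap.range ((E * F : H →L[ℂ] H) : H →ₗ[ℂ] H)).topologicalClosure :=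
          hVrange
      _ ≤ LinearMap.range (E : H →ₗ[ℂ] H) :=
          Submodule.topologicalClosure_minimal _ (LinearMap.range_comp_le_range _ _)
            hE1.isClosed_range

open ContinuousLinearMap in
/-- If `E, F` are orthogonal projections with `F ∧ (I - E) = 0` (trivial intersection
of ranges), then `F ≼ E` in the sense of Murray–von Neumann: there is a partial
isometry `V` with `V*V = F` and `VV*` a projection with range inside the range of `E`.
In particular, if `E` has finite rank then so does `F`, with `rank F ≤ rank E`. -/
theorem stmt7 {H : Type*} [NormedAddCommGroup H] [InnerProductSpace ℂ H]
    [CompleteSpace H] (E F : H →L[ℂ] H)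
    (hE1 : IsIdempotentElem E) (hE2 : IsSelfAdjoint E)
    (hF1 : IsIdempotentElem F) (hF2 : IsSelfAdjoint F)
    (h : LinearMap.range (F : H →ₗ[ℂ] H) ⊓ LinearMap.range ((1 - E : H →L[ℂ] H) : H →ₗ[ℂ] H) = ⊥) :
    (∃ V : H →L[ℂ] H, adjoint V * V = F ∧ IsIdempotentElem (V * adjoint V) ∧
        LinearMap.range ((V * adjoint V : H →L[ℂ] H) : H →ₗ[ℂ] H) ≤ LinearMap.range (E : H →ₗ[ℂ] H)) ∧
      (FiniteDimensional ℂ ↥(LinearMap.range (E : H →ₗ[ℂ] H)) →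
        FiniteDimensional ℂ ↥(LinearMap.range (F : H →ₗ[ℂ] H)) ∧
          Module.finrank ℂ ↥(LinearMap.range (F : H →ₗ[ℂ] H))
            ≤ Module.finrank ℂ ↥(LinearMap.range (E : H →ₗ[ℂ] H))) :=
  stmt7_general E F hE1 hF1 hF2 h
end

section
/- Let T ∈ B(H), c > 0, and let E be the spectral projection of |T| associated with the interval [0, c]. Let A ∈ B(H) with ‖A‖ < c, and let F be an orthogonal projection with ‖(T + A)F‖ < c − ‖A‖. Then F ∧ (I − E) = 0; consequently F is Murray–von Neumann subequivalent to E. -/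
/-!
On the range of `F` we have `‖T ξ‖ ≤ r ‖ξ‖` with `r = ‖(T + A) F‖ + ‖A‖ < c`, while `T` expands
the range of `1 - E` by the factor `c`. Splitting `ξ = E ξ + (1 - E) ξ` therefore gives
`‖E F η‖ ≥ δ ‖F η‖` with `δ = (c - r) / 2c`, which kills `F ∧ (1 - E)` and says `F E F ≥ δ² F`
in the operator order. Then `G = F E F + (1 - F)` is strictly positive and commutes with `F`, and
`V = E F G^(-1/2)` satisfies `V* V = F` and `V V* ≤ E`.
-/

section Normed

variable {𝕜 X Y : Type*} [NontriviallyNormedField 𝕜] [NormedAddCommGroup X] [NormedSpace 𝕜 X]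
  [NormedAddCommGroup Y] [NormedSpace 𝕜 Y]

lemma ContinuousLinearMap.norm_apply_le_of_apply_eq_self {T A F : X →L[𝕜] X} {ξ : X}
    (hξ : F ξ = ξ) : ‖T ξ‖ ≤ (‖(T + A) * F‖ + ‖A‖) * ‖ξ‖ :=
  calc ‖T ξ‖ = ‖((T + A) * F) ξ - A ξ‖ := by simp [hξ]
    _ ≤ ‖(T + A) * F‖ * ‖ξ‖ + ‖A‖ * ‖ξ‖ :=
        (norm_sub_le _ _).trans (add_le_add (le_opNorm _ _) (le_opNorm _ _))
    _ = (‖(T + A) * F‖ + ‖A‖) * ‖ξ‖ := by ring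

lemma ContinuousLinearMap.sub_mul_norm_le_two_mul_norm_apply {T : X →L[𝕜] Y} {E : X →L[𝕜] X}
    {c r : ℝ} (hc : 0 ≤ c)
    (hle : ∀ ξ, ‖T (E ξ)‖ ≤ c * ‖E ξ‖) (hge : ∀ ξ, c * ‖ξ - E ξ‖ ≤ ‖T (ξ - E ξ)‖)
    {ξ : X} (hξ : ‖T ξ‖ ≤ r * ‖ξ‖) : (c - r) * ‖ξ‖ ≤ 2 * c * ‖E ξ‖ := by
  have hT : ‖T (ξ - E ξ)‖ ≤ ‖T ξ‖ + ‖T (E ξ)‖ := by rw [map_sub]; exact norm_sub_le _ _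
  have hsplit : c * ‖ξ‖ ≤ c * ‖E ξ‖ + c * ‖ξ - E ξ‖ := by
    rw [← mul_add]
    exact mul_le_mul_of_nonneg_left (by simpa using norm_add_le (E ξ) (ξ - E ξ)) hc
  linarith [hle ξ, hge ξ]

end Normed

section Hilbert

open ContinuousLinearMap

variable {𝕜 H K : Type*} [RCLike 𝕜] [NormedAddCommGroup H] [InnerProductSpace 𝕜 H]
  [CompleteSpace H] [NormedAddCommGroup K] [InnerProductSpace 𝕜 K] [CompleteSpace K]

lemma ContinuousLinearMap.adjoint_mul_self_le_of_norm_le {S R : H →L[𝕜] K}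
    (h : ∀ x, ‖S x‖ ≤ ‖R x‖) : adjoint S ∘L S ≤ adjoint R ∘L R := by
  refine (le_def _ _).mpr (isPositive_def'.mpr ⟨?_, fun x => ?_⟩)
  · exact (isPositive_adjoint_comp_self R).isSelfAdjoint.sub
      (isPositive_adjoint_comp_self S).isSelfAdjoint
  · rw [reApplyInnerSelf_apply, sub_apply, inner_sub_left, map_sub,
      ← apply_norm_sq_eq_inner_adjoint_left, ← apply_norm_sq_eq_inner_adjoint_left, sub_nonneg]
    exact pow_le_pow_left₀ (norm_nonneg _) (h x) 2

end Hilbert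

open ContinuousLinearMap in
lemma IsStarProjection.smul_le_mul_mul_of_mul_norm_le {H : Type*} [NormedAddCommGroup H]
    [InnerProductSpace ℂ H] [CompleteSpace H] {p q : H →L[ℂ] H} (hp : IsStarProjection p)
    (hq : IsStarProjection q) {δ : ℝ} (hδ : 0 ≤ δ) (h : ∀ x, δ * ‖p x‖ ≤ ‖q (p x)‖) :
    δ ^ 2 • p ≤ p * q * p := by
  have hle := adjoint_mul_self_le_of_norm_le (S := δ • p) (R := q * p)
    (fun x => by simpa [norm_smul, abs_of_nonneg hδ] using h x)
  convert hle using 1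
  · rw [← star_eq_adjoint, star_smul, star_trivial, hp.isSelfAdjoint.star_eq, ← mul_def,
      smul_mul_smul, ← sq, hp.isIdempotentElem.eq]
  · rw [← star_eq_adjoint, star_mul, hp.isSelfAdjoint.star_eq, hq.isSelfAdjoint.star_eq,
      ← mul_def, ← mul_assoc, mul_assoc p q q, hq.isIdempotentElem.eq]

section CStarAlgebra

open CFC

variable {A : Type*} [CStarAlgebra A] [PartialOrder A] [StarOrderedRing A]

lemma IsStarProjection.algebraMap_min_le_add_one_sub {p a : A} (hp : IsStarProjection p)
    {ε : ℝ} (h : ε • p ≤ a) : algebraMap ℝ A (min ε 1) ≤ a + (1 - p) := by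
  have hdecomp : a + (1 - p) - algebraMap ℝ A (min ε 1)
      = (a - ε • p) + ((ε - min ε 1) • p + (1 - min ε 1) • (1 - p)) := by
    rw [Algebra.algebraMap_eq_smul_one]; module
  rw [← sub_nonneg, hdecomp]
  exact add_nonneg (sub_nonneg.mpr h) <|
    add_nonneg (smul_nonneg (by simp) hp.nonneg) (smul_nonneg (by simp) hp.one_sub_nonneg)

lemma IsStarProjection.isStrictlyPositive_add_one_sub {p a : A} (hp : IsStarProjection p)
    {ε : ℝ} (hε : 0 < ε) (h : ε • p ≤ a) : IsStrictlyPositive (a + (1 - p)) :=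
  (isStrictlyPositive_algebraMap (lt_min hε one_pos)).of_le (hp.algebraMap_min_le_add_one_sub h)

theorem IsStarProjection.exists_star_mul_self_eq_of_smul_le {p q : A}
    (hp : IsStarProjection p) (hq : IsStarProjection q) {ε : ℝ} (hε : 0 < ε)
    (h : ε • p ≤ p * q * p) :
    ∃ v : A, star v * v = p ∧ IsStarProjection (v * star v) ∧ q * v = v := by
  set G := p * q * p + (1 - p)
  have hG : IsStrictlyPositive G := hp.isStrictlyPositive_add_one_sub hε h
  have hGp : G * p = p * q * p := by
    rw [add_mul, hp.one_sub_mul_self, add_zero, mul_assoc, hp.isIdempotentElem.eq]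
  have hpG : p * G = p * q * p := by
    rw [mul_add, hp.mul_one_sub_self, add_zero, ← mul_assoc, ← mul_assoc, hp.isIdempotentElem.eq]
  set W := G ^ (-(1 / 2) : ℝ)
  have hWp : Commute W p := Commute.cfc_nnreal (hGp.trans hpG.symm) _
  have hW : star W = W := (IsSelfAdjoint.of_nonneg rpow_nonneg).star_eq
  have hvv : star (q * p * W) * (q * p * W) = p :=
    calc star (q * p * W) * (q * p * W) = W * (p * (q * q) * p) * W := by
          simp only [star_mul, hW, hp.isSelfAdjoint.star_eq, hq.isSelfAdjoint.star_eq, mul_assoc]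
      _ = W * (G * p) * W := by rw [hq.isIdempotentElem.eq, hGp]
      _ = W * G * W * p := by simp only [mul_assoc, hWp.eq]
      _ = p := by rw [conjugate_rpow_neg_one_half G, one_mul]
  have hvp : q * p * W * p = q * p * W := by
    rw [mul_assoc, hWp.eq, ← mul_assoc, mul_assoc q, hp.isIdempotentElem.eq]
  refine ⟨q * p * W, hvv, ⟨?_, IsSelfAdjoint.mul_star_self _⟩, ?_⟩
  · rw [IsIdempotentElem, mul_assoc, ← mul_assoc (star _), hvv, ← mul_assoc, hvp]
  · rw [← mul_assoc, ← mul_assoc, hq.isIdempotentElem.eq]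

end CStarAlgebra

open ContinuousLinearMap in
theorem stmt8_general {H : Type*} [NormedAddCommGroup H] [InnerProductSpace ℂ H]
    [CompleteSpace H] (T A E F : H →L[ℂ] H) (c : ℝ)
    (hE1 : IsIdempotentElem E) (hE2 : IsSelfAdjoint E)
    (hEle : ∀ ξ ∈ LinearMap.range (E : H →ₗ[ℂ] H), ‖T ξ‖ ≤ c * ‖ξ‖)
    (hEge : ∀ ξ ∈ LinearMap.range ((1 - E : H →L[ℂ] H) : H →ₗ[ℂ] H), c * ‖ξ‖ ≤ ‖T ξ‖)
    (hA : ‖A‖ < c)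
    (hF1 : IsIdempotentElem F) (hF2 : IsSelfAdjoint F)
    (hTAF : ‖(T + A) * F‖ < c - ‖A‖) :
    LinearMap.range (F : H →ₗ[ℂ] H) ⊓ LinearMap.range ((1 - E : H →L[ℂ] H) : H →ₗ[ℂ] H) = ⊥ ∧
      ∃ V : H →L[ℂ] H, adjoint V * V = F ∧ IsIdempotentElem (V * adjoint V) ∧
        LinearMap.range ((V * adjoint V : H →L[ℂ] H) : H →ₗ[ℂ] H) ≤ LinearMap.range (E : H →ₗ[ℂ] H) := by
  set r := ‖(T + A) * F‖ + ‖A‖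
  have hc : 0 < c := (norm_nonneg A).trans_lt hA
  have hrc : 0 < c - r := by linarith
  have hE : IsStarProjection E := ⟨hE1, hE2⟩
  have hF : IsStarProjection F := ⟨hF1, hF2⟩
  have hEF : ∀ η, (c - r) * ‖F η‖ ≤ 2 * c * ‖E (F η)‖ := fun η =>
    sub_mul_norm_le_two_mul_norm_apply hc.le (fun ξ => hEle _ ⟨ξ, rfl⟩)
      (fun ξ => hEge _ ⟨ξ, by simp⟩)
      (norm_apply_le_of_apply_eq_self (DFunLike.congr_fun hF1.eq η))
  refine ⟨?_, ?_⟩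
  · refine eq_bot_iff.mpr ?_
    rintro _ ⟨⟨η, rfl⟩, ⟨ζ, hζ⟩⟩
    change (1 - E) ζ = F η at hζ
    have hEFη : E (F η) = 0 := hζ ▸ DFunLike.congr_fun hE.mul_one_sub_self ζ
    have hnonpos := hEF η
    rw [hEFη, norm_zero, mul_zero] at hnonpos
    exact (Submodule.mem_bot ℂ).mpr (norm_le_zero_iff.mp (nonpos_of_mul_nonpos_right hnonpos hrc))
  · set δ := (c - r) / (2 * c)
    have hδ : 0 < δ := by positivity
    have hδF : ∀ η, δ * ‖F η‖ ≤ ‖E (F η)‖ := fun η => by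
      rw [div_mul_eq_mul_div, div_le_iff₀ (by positivity), mul_comm _ (2 * c)]
      exact hEF η
    obtain ⟨V, hVV, hVproj, hEV⟩ := hF.exists_star_mul_self_eq_of_smul_le hE (pow_pos hδ 2)
      (hF.smul_le_mul_mul_of_mul_norm_le hE hδ.le hδF)
    rw [star_eq_adjoint] at hVV hVproj
    refine ⟨V, hVV, hVproj.isIdempotentElem, ?_⟩
    have hEVV : E * (V * adjoint V) = V * adjoint V := by rw [← mul_assoc, hEV]
    rintro _ ⟨ξ, rfl⟩
    exact ⟨_, DFunLike.congr_fun hEVV ξ⟩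

open ContinuousLinearMap in
/-- Let `E` be the spectral projection of `|T|` for `[0, c]` (an orthogonal projection
with `‖Tξ‖ ≤ c‖ξ‖` on its range and `‖Tξ‖ ≥ c‖ξ‖` on the range of `I - E`). If
`‖A‖ < c` and `F` is an orthogonal projection with `‖(T + A)F‖ < c - ‖A‖`, then
`F ∧ (I - E) = 0`; consequently `F ≼ E` (Murray–von Neumann subequivalence). -/
theorem stmt8 {H : Type*} [NormedAddCommGroup H] [InnerProductSpace ℂ H]
    [CompleteSpace H] (T A E F : H →L[ℂ] H) (c : ℝ) (hc : 0 < c)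
    (hE1 : IsIdempotentElem E) (hE2 : IsSelfAdjoint E)
    (hEle : ∀ ξ ∈ LinearMap.range (E : H →ₗ[ℂ] H), ‖T ξ‖ ≤ c * ‖ξ‖)
    (hEge : ∀ ξ ∈ LinearMap.range ((1 - E : H →L[ℂ] H) : H →ₗ[ℂ] H), c * ‖ξ‖ ≤ ‖T ξ‖)
    (hA : ‖A‖ < c)
    (hF1 : IsIdempotentElem F) (hF2 : IsSelfAdjoint F)
    (hTAF : ‖(T + A) * F‖ < c - ‖A‖) :
    LinearMap.range (F : H →ₗ[ℂ] H) ⊓ LinearMap.range ((1 - E : H →L[ℂ] H) : H →ₗ[ℂ] H) = ⊥ ∧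
      ∃ V : H →L[ℂ] H, adjoint V * V = F ∧ IsIdempotentElem (V * adjoint V) ∧
        LinearMap.range ((V * adjoint V : H →L[ℂ] H) : H →ₗ[ℂ] H) ≤ LinearMap.range (E : H →ₗ[ℂ] H) :=
  stmt8_general T A E F c hE1 hE2 hEle hEge hA hF1 hF2 hTAF
end

section
/- Let T ∈ B(H), c ∈ (0,1), and let E be the spectral projection of |T| associated with [0, c]. If I − E has finite rank, then for every b ∈ [0, 1 − c), the spectral projection F of |I − T| associated with [0, b] has finite rank. -/
/-! A vector in the ranges of both `E` and `F` satisfies `‖ξ‖ ≤ ‖(I - T)ξ‖ + ‖Tξ‖ ≤ (b + c)‖ξ‖`,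
so it vanishes since `b + c < 1`. Hence `I - E` is injective on the range of `F`, which
therefore embeds into the finite-dimensional range of `I - E`. -/

theorem eq_zero_of_norm_le_of_norm_sub_le {E : Type*} [NormedAddCommGroup E] {x y : E} {b c : ℝ}
    (hy : ‖y‖ ≤ c * ‖x‖) (hxy : ‖x - y‖ ≤ b * ‖x‖) (hbc : b + c < 1) : x = 0 := by
  have : ‖x‖ ≤ (b + c) * ‖x‖ := calc
    ‖x‖ ≤ ‖x - y‖ + ‖y‖ := norm_le_norm_sub_add x y
    _ ≤ (b + c) * ‖x‖ := by linarith
  exact norm_le_zero_iff.1 (by nlinarith [norm_nonneg x])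

theorem FiniteDimensional.of_disjoint_ker {K V W : Type*} [DivisionRing K] [AddCommGroup V]
    [Module K V] [AddCommGroup W] [Module K W] (f : V →ₗ[K] W)
    [FiniteDimensional K (LinearMap.range f)] {S : Submodule K V}
    (hS : Disjoint S (LinearMap.ker f)) : FiniteDimensional K S :=
  .of_injective ((f.domRestrict S).codRestrict (LinearMap.range f) fun x => f.mem_range_self x)
    fun _ _ h => LinearMap.injective_domRestrict_iff.2 hS (congrArg Subtype.val h)

theorem stmt9_general {H : Type*} [NormedAddCommGroup H] [InnerProductSpace ℂ H]
    (T E F : H →L[ℂ] H) (c b : ℝ)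
    (hb : b < 1 - c)
    (hEle : ∀ ξ ∈ LinearMap.range (E : H →ₗ[ℂ] H), ‖T ξ‖ ≤ c * ‖ξ‖)
    (hEfin : FiniteDimensional ℂ ↥(LinearMap.range ((1 - E : H →L[ℂ] H) : H →ₗ[ℂ] H)))
    (hFle : ∀ ξ ∈ LinearMap.range (F : H →ₗ[ℂ] H), ‖(1 - T) ξ‖ ≤ b * ‖ξ‖) :
    FiniteDimensional ℂ ↥(LinearMap.range (F : H →ₗ[ℂ] H)) := by
  refine FiniteDimensional.of_disjoint_ker ((1 - E : H →L[ℂ] H) : H →ₗ[ℂ] H) ?_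
  refine LinearMap.disjoint_ker.2 fun ξ hξF hξ => ?_
  have hξE : ξ ∈ LinearMap.range (E : H →ₗ[ℂ] H) := ⟨ξ, (sub_eq_zero.1 hξ).symm⟩
  exact eq_zero_of_norm_le_of_norm_sub_le (hEle ξ hξE) (hFle ξ hξF) (by linarith)

/-- Let `c ∈ (0,1)` and let `E` be the spectral projection of `|T|` for `[0, c]`
(an orthogonal projection with `‖Tξ‖ ≤ c‖ξ‖` on its range and `‖Tξ‖ ≥ c‖ξ‖` on the
range of `I - E`). If `I - E` has finite rank, then for every `b ∈ [0, 1 - c)` the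
spectral projection `F` of `|I - T|` for `[0, b]` has finite rank. -/
theorem stmt9 {H : Type*} [NormedAddCommGroup H] [InnerProductSpace ℂ H]
    [CompleteSpace H] (T E F : H →L[ℂ] H) (c b : ℝ)
    (hc : 0 < c) (hc1 : c < 1) (hb0 : 0 ≤ b) (hb : b < 1 - c)
    (hE1 : IsIdempotentElem E) (hE2 : IsSelfAdjoint E)
    (hEle : ∀ ξ ∈ LinearMap.range (E : H →ₗ[ℂ] H), ‖T ξ‖ ≤ c * ‖ξ‖)
    (hEge : ∀ ξ ∈ LinearMap.range ((1 - E : H →L[ℂ] H) : H →ₗ[ℂ] H), c * ‖ξ‖ ≤ ‖T ξ‖)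
    (hEfin : FiniteDimensional ℂ ↥(LinearMap.range ((1 - E : H →L[ℂ] H) : H →ₗ[ℂ] H)))
    (hF1 : IsIdempotentElem F) (hF2 : IsSelfAdjoint F)
    (hFle : ∀ ξ ∈ LinearMap.range (F : H →ₗ[ℂ] H), ‖(1 - T) ξ‖ ≤ b * ‖ξ‖)
    (hFge : ∀ ξ ∈ LinearMap.range ((1 - F : H →L[ℂ] H) : H →ₗ[ℂ] H), b * ‖ξ‖ ≤ ‖(1 - T) ξ‖) :
    FiniteDimensional ℂ ↥(LinearMap.range (F : H →ₗ[ℂ] H)) :=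
  stmt9_general T E F c b hb hEle hEfin hFle
end

section
/- Let S be the unilateral shift on ℓ²(ℕ) (S eᵢ = e_{i+1}), let E be the orthogonal projection onto the closed span of {e_{2i} : i ≥ 1}, and set P = E + (I − E)(S + S*)E. Then P is an idempotent and S − P is invertible in B(ℓ²(ℕ)). In particular, the unilateral shift is a clean element of B(ℓ²(ℕ)). -/
/-!
`P` is idempotent because `E` is, and `N = (1 - E)(S + S*)E` satisfies `EN = 0`, `NE = N`.
In the coordinates `x (2k), x (2k+1)` the operator `S - P` acts blockwise by the matrix
`!![0, -1; 1, -1]`, whose characteristic polynomial is `X² + X + 1`; hence `(S - P)³ = 1`.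
-/

open ContinuousLinearMap

theorem IsIdempotentElem.add_one_sub_mul_mul {R : Type*} [Ring R] {e : R}
    (he : IsIdempotentElem e) (a : R) : IsIdempotentElem (e + (1 - e) * a * e) := by
  have h_left : e * (1 - e) = 0 := by rw [mul_sub, mul_one, he.eq, sub_self]
  unfold IsIdempotentElem
  calc (e + (1 - e) * a * e) * (e + (1 - e) * a * e)
      = e * e + (e * (1 - e)) * a * e + (1 - e) * a * (e * e)
        + (1 - e) * a * (e * (1 - e)) * a * e := by noncomm_ring
    _ = e + (1 - e) * a * e := by rw [he.eq, h_left]; noncomm_ring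

theorem lp.isIdempotentElem_of_apply_eq_ite {𝕜 ι : Type*} [NormedField 𝕜] {F : ι → Type*}
    [∀ i, NormedAddCommGroup (F i)] [∀ i, NormedSpace 𝕜 (F i)] {p : ENNReal} [Fact (1 ≤ p)]
    {E : lp F p →L[𝕜] lp F p} {q : ι → Prop} [DecidablePred q]
    (hE : ∀ x i, E x i = if q i then x i else 0) : IsIdempotentElem E := by
  ext x i
  simp only [mul_apply_eq_comp, hE]
  split_ifs <;> rfl

theorem lp.shift_single {𝕜 : Type*} [NormedField 𝕜] {p : ENNReal} [Fact (1 ≤ p)]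
    {S : lp (fun _ : ℕ => 𝕜) p →L[𝕜] lp (fun _ : ℕ => 𝕜) p}
    (hS0 : ∀ x, S x 0 = 0) (hS : ∀ x n, S x (n + 1) = x n) (n : ℕ) (a : 𝕜) :
    S (lp.single p n a) = lp.single p (n + 1) a := by
  ext (_ | m)
  · simp [hS0]
  · simp [hS, lp.single_apply, Pi.single_apply]

theorem lp.adjoint_shift_apply {𝕜 : Type*} [RCLike 𝕜]
    {S : lp (fun _ : ℕ => 𝕜) 2 →L[𝕜] lp (fun _ : ℕ => 𝕜) 2}
    (hS0 : ∀ x, S x 0 = 0) (hS : ∀ x n, S x (n + 1) = x n)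
    (x : lp (fun _ : ℕ => 𝕜) 2) (n : ℕ) : adjoint S x n = x (n + 1) := by
  have h := adjoint_inner_left S (lp.single 2 n (1 : 𝕜)) x
  rw [lp.shift_single hS0 hS, lp.inner_single_right, lp.inner_single_right] at h
  simpa using congrArg (starRingEnd 𝕜) h

theorem lp.pow_three_eq_one_of_apply_pairs {𝕜 : Type*} [NormedField 𝕜] {p : ENNReal}
    [Fact (1 ≤ p)] {T : lp (fun _ : ℕ => 𝕜) p →L[𝕜] lp (fun _ : ℕ => 𝕜) p}
    (h_even : ∀ x k, T x (2 * k) = -x (2 * k + 1))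
    (h_odd : ∀ x k, T x (2 * k + 1) = x (2 * k) - x (2 * k + 1)) : T ^ 3 = 1 := by
  ext x n
  obtain ⟨k, rfl | rfl⟩ := Nat.even_or_odd' n <;>
  simp only [pow_succ, pow_zero, one_mul, mul_apply_eq_comp, one_apply_eq_self, h_even, h_odd] <;>
  ring

section ShiftMinusIdempotent

variable {𝕜 : Type*} [RCLike 𝕜] {S E : lp (fun _ : ℕ => 𝕜) 2 →L[𝕜] lp (fun _ : ℕ => 𝕜) 2}

theorem shift_sub_apply_two_mul (hS0 : ∀ x, S x 0 = 0) (hS : ∀ x n, S x (n + 1) = x n)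
    (hE : ∀ x n, E x n = if Odd n then x n else 0) (x : lp (fun _ : ℕ => 𝕜) 2) (k : ℕ) :
    (S - (E + (1 - E) * (S + adjoint S) * E)) x (2 * k) = -x (2 * k + 1) := by
  rcases k with _ | k
  · simp [hS0, hE, lp.adjoint_shift_apply hS0 hS]
  · rw [show 2 * (k + 1) = 2 * k + 1 + 1 by ring]
    simp [hS, hE, lp.adjoint_shift_apply hS0 hS, parity_simps]

theorem shift_sub_apply_two_mul_add_one (hS : ∀ x n, S x (n + 1) = x n)
    (hE : ∀ x n, E x n = if Odd n then x n else 0) (x : lp (fun _ : ℕ => 𝕜) 2) (k : ℕ) :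
    (S - (E + (1 - E) * (S + adjoint S) * E)) x (2 * k + 1) = x (2 * k) - x (2 * k + 1) := by
  simp [hS, hE]

end ShiftMinusIdempotent

open ContinuousLinearMap in
/-- Let `S` be the unilateral shift on `ℓ²(ℕ)` (`S eᵢ = e_{i+1}` in 0-based indexing),
let `E` be the orthogonal projection onto the closed span of the second, fourth, ...
basis vectors (odd 0-based indices), and set `P = E + (I - E)(S + S*)E`. Then `P` is
an idempotent and `S - P` is invertible; in particular the shift is clean. -/
theorem stmt11 (S E : lp (fun _ : ℕ => ℂ) 2 →L[ℂ] lp (fun _ : ℕ => ℂ) 2)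
    (hS0 : ∀ x : lp (fun _ : ℕ => ℂ) 2, S x 0 = 0)
    (hS : ∀ (x : lp (fun _ : ℕ => ℂ) 2) (n : ℕ), S x (n + 1) = x n)
    (hE : ∀ (x : lp (fun _ : ℕ => ℂ) 2) (n : ℕ),
      E x n = if Odd n then x n else 0) :
    IsIdempotentElem (E + (1 - E) * (S + adjoint S) * E) ∧
      IsUnit (S - (E + (1 - E) * (S + adjoint S) * E)) := by
  have hT3 : (S - (E + (1 - E) * (S + adjoint S) * E)) ^ 3 = 1 :=
    lp.pow_three_eq_one_of_apply_pairs (shift_sub_apply_two_mul hS0 hS hE)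
      (shift_sub_apply_two_mul_add_one hS hE)
  exact ⟨(lp.isIdempotentElem_of_apply_eq_ite hE).add_one_sub_mul_mul _,
    .of_pow_eq_one hT3 three_ne_zero⟩
end

section
/- Let S be the unilateral shift on ℓ²(ℕ). Then for every orthogonal projection P ∈ B(ℓ²(ℕ)), the operator 3S − P is not invertible. In particular, B(ℓ²(ℕ)) is not a *-clean ring. -/
/-!
If `(3S - P) x = e₀`, then since `S x` vanishes at `0` the `0`-th coordinate gives `(P x) 0 = -1`,
so `1 ≤ ‖P x‖ ≤ ‖x‖` (a self-adjoint idempotent has norm at most `1`). But `S` does not decrease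
norms, so `1 = ‖3 S x - P x‖ ≥ 3 ‖x‖ - ‖x‖ = 2 ‖x‖ ≥ 2`.
-/

open scoped ENNReal

theorem lp.norm_le_of_norm_apply_le_succ {E : ℕ → Type*} [∀ n, NormedAddCommGroup (E n)]
    {p : ℝ≥0∞} [Fact (1 ≤ p)] (hp : 0 < p.toReal) {f g : lp E p}
    (hfg : ∀ n, ‖f n‖ ≤ ‖g (n + 1)‖) : ‖f‖ ≤ ‖g‖ := by
  rw [← Real.rpow_le_rpow_iff (norm_nonneg f) (norm_nonneg g) hp,
    lp.norm_rpow_eq_tsum hp, lp.norm_rpow_eq_tsum hp]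
  refine Summable.tsum_le_tsum_of_inj Nat.succ Nat.succ_injective
    (fun _ _ => by positivity) (fun n => by gcongr; exact hfg n)
    ((lp.memℓp f).summable hp) ((lp.memℓp g).summable hp)

/-- For the unilateral shift `S` on `ℓ²(ℕ)` and every orthogonal projection `P`,
the operator `3S - P` is not invertible. In particular `B(ℓ²(ℕ))` is not `*`-clean. -/
theorem stmt12 (S : lp (fun _ : ℕ => ℂ) 2 →L[ℂ] lp (fun _ : ℕ => ℂ) 2)
    (hS0 : ∀ x : lp (fun _ : ℕ => ℂ) 2, S x 0 = 0)
    (hS : ∀ (x : lp (fun _ : ℕ => ℂ) 2) (n : ℕ), S x (n + 1) = x n) :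
    ∀ P : lp (fun _ : ℕ => ℂ) 2 →L[ℂ] lp (fun _ : ℕ => ℂ) 2,
      IsIdempotentElem P → IsSelfAdjoint P → ¬ IsUnit ((3 : ℂ) • S - P) := by
  intro P hP hPsa hU
  obtain ⟨x, hx⟩ := (ContinuousLinearMap.isUnit_iff_bijective.mp hU).2 (lp.single 2 0 1)
  replace hx : (3 : ℂ) • S x - P x = lp.single 2 0 1 := hx
  have hPx0 : P x 0 = -1 := by
    have h0 := congrArg (· 0) hx
    simp only [lp.coeFn_sub, lp.coeFn_smul, Pi.sub_apply, Pi.smul_apply, hS0, smul_zero,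
      zero_sub, lp.single_apply_self] at h0
    exact neg_eq_iff_eq_neg.mp h0
  have hPx : 1 ≤ ‖P x‖ := by
    simpa [hPx0] using lp.norm_apply_le_norm two_ne_zero (P x) 0
  have hPx_le : ‖P x‖ ≤ ‖x‖ := by
    simpa using P.le_of_opNorm_le (IsStarProjection.norm_le P ⟨hP, hPsa⟩) x
  have hSx : ‖x‖ ≤ ‖S x‖ := lp.norm_le_of_norm_apply_le_succ (by norm_num) (fun n => by rw [hS])
  have hsol : 3 * ‖S x‖ - ‖P x‖ ≤ 1 := by
    calc 3 * ‖S x‖ - ‖P x‖ = ‖(3 : ℂ) • S x‖ - ‖P x‖ := by rw [norm_smul]; norm_num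
      _ ≤ ‖(3 : ℂ) • S x - P x‖ := norm_sub_norm_le _ _
      _ = 1 := by rw [hx, lp.norm_single (by norm_num)]; simp
  linarith
end

section
/- Let S be the unilateral shift on ℓ²(ℕ) and let Q ∈ B(ℓ²(ℕ)) be an idempotent commuting with S. Then either Q = I or S − Q is not invertible. Consequently S is not a strongly clean element of B(ℓ²(ℕ)): there is no idempotent Q commuting with S such that S − Q is invertible. -/
/-!
Since `Q` commutes with `S` and the range of `S` is the kernel of `x ↦ x 0`, the first
coordinate of `Q x` is `x 0 * c`, where `c` is the first coordinate of `Q e₀`; idempotence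
forces `c ∈ {0, 1}`.
If `c = 0`, every vector in the range of `S - Q` vanishes at `0`, so `S - Q` is not surjective.
If `c = 1`, the idempotent `1 - Q` commutes with `S` and takes values in the range of `S`, which
forces it to vanish coordinate by coordinate, so `Q = 1`. Finally `S - 1` is not invertible on
`ℓᵖ` for `p < ∞`, since a preimage of `e₀` would be the constant sequence `-1`.
-/

open scoped ENNReal

theorem Memℓp.comp_injective {α β E : Type*} [NormedAddCommGroup E] {p : ℝ≥0∞} {f : α → E}
    (hf : Memℓp f p) {i : β → α} (hi : Function.Injective i) : Memℓp (f ∘ i) p := by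
  rcases p.trichotomy with rfl | rfl | hp
  · exact memℓp_zero ((memℓp_zero_iff.1 hf).preimage hi.injOn)
  · exact memℓp_infty <|
      (memℓp_infty_iff.1 hf).mono (Set.range_comp_subset_range i fun a => ‖f a‖)
  · exact (memℓp_gen_iff hp).2 (((memℓp_gen_iff hp).1 hf).comp_injective hi)

section Shift

variable {p : ℝ≥0∞}

def lp.tail {E : Type*} [NormedAddCommGroup E] (x : lp (fun _ : ℕ => E) p) :
    lp (fun _ : ℕ => E) p :=
  ⟨fun n => x (n + 1), (lp.memℓp x).comp_injective (add_left_injective 1)⟩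

@[simp]
theorem lp.tail_apply {E : Type*} [NormedAddCommGroup E] (x : lp (fun _ : ℕ => E) p) (n : ℕ) :
    lp.tail x n = x (n + 1) :=
  rfl

variable {𝕜 : Type*} [NontriviallyNormedField 𝕜] [Fact (1 ≤ p)]

local notation "ℓ" => lp (fun _ : ℕ => 𝕜) p

theorem not_isUnit_of_forall_apply_zero_eq_zero {T : ℓ →L[𝕜] ℓ} (hT : ∀ x, T x 0 = 0) :
    ¬IsUnit T := by
  intro hu
  obtain ⟨R, hR⟩ := hu.exists_right_inv
  have hTR : T (R (lp.single p 0 1)) = lp.single p 0 1 := by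
    simpa using congr($hR (lp.single p 0 1))
  simpa [hTR] using hT (R (lp.single p 0 1))

structure IsUnilateralShift (S : ℓ →L[𝕜] ℓ) : Prop where
  apply_zero : ∀ x, S x 0 = 0
  apply_succ : ∀ x n, S x (n + 1) = x n

namespace IsUnilateralShift

theorem apply_tail_add_single {S : ℓ →L[𝕜] ℓ} (hS : IsUnilateralShift S) (x : ℓ) :
    S (lp.tail x) + x 0 • lp.single p 0 1 = x := by
  refine lp.ext (funext fun n => ?_)
  rw [lp.coeFn_add, Pi.add_apply, lp.coeFn_smul, Pi.smul_apply]
  cases n <;> simp [lp.single_apply, hS.apply_zero, hS.apply_succ]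

theorem apply_zero_of_commute {S : ℓ →L[𝕜] ℓ} (hS : IsUnilateralShift S) {T : ℓ →L[𝕜] ℓ}
    (hT : T * S = S * T) (x : ℓ) : T x 0 = x 0 * T (lp.single p 0 1) 0 := by
  have hTS : T (S (lp.tail x)) = S (T (lp.tail x)) := congr($hT (lp.tail x))
  conv_lhs => rw [← hS.apply_tail_add_single x, map_add, map_smul, hTS]
  rw [lp.coeFn_add, Pi.add_apply, lp.coeFn_smul, Pi.smul_apply, hS.apply_zero, zero_add,
    smul_eq_mul]

theorem eq_zero_of_isIdempotentElem {S : ℓ →L[𝕜] ℓ} (hS : IsUnilateralShift S)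
    {P : ℓ →L[𝕜] ℓ} (hP : IsIdempotentElem P) (hPS : P * S = S * P) (hP0 : ∀ x, P x 0 = 0) :
    P = 0 := by
  suffices ∀ n x, P x n = 0 from ContinuousLinearMap.ext fun x => lp.ext (funext (this · x))
  intro n
  induction n with
  | zero => exact hP0
  | succ n ih =>
    intro x
    -- `P x` vanishes at `0`, so it lies in the range of `S`, which `P` maps into itself.
    have hPx : P x = S (P (lp.tail (P x))) :=
      calc P x = P (P x) := congr($hP.symm x)
        _ = P (S (lp.tail (P x))) := by
          conv_lhs => rw [← hS.apply_tail_add_single (P x), hP0, zero_smul, add_zero]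
        _ = S (P (lp.tail (P x))) := congr($hPS (lp.tail (P x)))
    rw [hPx, hS.apply_succ, ih]

theorem eq_one_or_not_isUnit_sub {S : ℓ →L[𝕜] ℓ} (hS : IsUnilateralShift S) {Q : ℓ →L[𝕜] ℓ}
    (hQ : IsIdempotentElem Q) (hQS : Q * S = S * Q) : Q = 1 ∨ ¬IsUnit (S - Q) := by
  have hc : IsIdempotentElem (Q (lp.single p 0 1) 0) := by
    have := hS.apply_zero_of_commute hQS (Q (lp.single p 0 1))
    rw [← mul_apply_eq_comp, hQ.eq] at this
    exact this.symm
  rcases IsIdempotentElem.iff_eq_zero_or_one.1 hc with hc0 | hc1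
  · refine Or.inr (not_isUnit_of_forall_apply_zero_eq_zero fun x => ?_)
    rw [sub_apply, lp.coeFn_sub, Pi.sub_apply, hS.apply_zero,
      hS.apply_zero_of_commute hQS x, hc0, mul_zero, sub_zero]
  · refine Or.inl <| (sub_eq_zero.1 <|
      hS.eq_zero_of_isIdempotentElem hQ.one_sub ?_ fun x => ?_).symm
    · rw [sub_mul, mul_sub, hQS, one_mul, mul_one]
    · rw [sub_apply, lp.coeFn_sub, Pi.sub_apply, one_apply_eq_self,
        hS.apply_zero_of_commute hQS x, hc1, mul_one, sub_self]

theorem not_isUnit_sub_one {S : ℓ →L[𝕜] ℓ} (hS : IsUnilateralShift S) (hp : p ≠ ∞) :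
    ¬IsUnit (S - 1) := by
  intro hu
  obtain ⟨R, hR⟩ := hu.exists_right_inv
  set x := R (lp.single p 0 1)
  have hx : (S - 1) x = lp.single p 0 1 := by rw [← mul_apply_eq_comp, hR, one_apply_eq_self]
  have hx_apply (n : ℕ) : S x n - x n = (lp.single p 0 1 : ℓ) n := by
    rw [← hx, sub_apply, one_apply_eq_self, lp.coeFn_sub, Pi.sub_apply]
  have hconst : ∀ n, x n = -1 := by
    intro n
    induction n with
    | zero =>
      have h0 := hx_apply 0
      rw [hS.apply_zero, lp.single_apply_self] at h0
      linear_combination -h0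
    | succ n ih =>
      have hn := hx_apply (n + 1)
      rw [hS.apply_succ, ih, lp.single_apply_ne p 0 1 n.succ_ne_zero] at hn
      linear_combination -hn
  have hp_pos : 0 < p.toReal := ENNReal.toReal_pos (zero_lt_one.trans_le Fact.out).ne' hp
  simpa [hconst, summable_const_iff] using (memℓp_gen_iff hp_pos).1 (lp.memℓp x)

end IsUnilateralShift

end Shift

/-- For the unilateral shift `S` on `ℓ²(ℕ)`: every idempotent `Q` commuting with `S`
satisfies `Q = I` or `S - Q` not invertible. Consequently `S` is not strongly clean:
there is no idempotent commuting with `S` such that `S - Q` is invertible. -/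
theorem stmt13 (S : lp (fun _ : ℕ => ℂ) 2 →L[ℂ] lp (fun _ : ℕ => ℂ) 2)
    (hS0 : ∀ x : lp (fun _ : ℕ => ℂ) 2, S x 0 = 0)
    (hS : ∀ (x : lp (fun _ : ℕ => ℂ) 2) (n : ℕ), S x (n + 1) = x n) :
    (∀ Q : lp (fun _ : ℕ => ℂ) 2 →L[ℂ] lp (fun _ : ℕ => ℂ) 2,
        IsIdempotentElem Q → Q * S = S * Q → (Q = 1 ∨ ¬ IsUnit (S - Q))) ∧
      ¬ ∃ Q : lp (fun _ : ℕ => ℂ) 2 →L[ℂ] lp (fun _ : ℕ => ℂ) 2,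
          IsIdempotentElem Q ∧ Q * S = S * Q ∧ IsUnit (S - Q) := by
  have hShift : IsUnilateralShift S := ⟨hS0, hS⟩
  refine ⟨fun Q hQ hQS => hShift.eq_one_or_not_isUnit_sub hQ hQS, ?_⟩
  rintro ⟨Q, hQ, hQS, hunit⟩
  rcases hShift.eq_one_or_not_isUnit_sub hQ hQS with rfl | hnot
  · exact hShift.not_isUnit_sub_one ENNReal.ofNat_ne_top hunit
  · exact hnot hunit
end

section
/- Define the unitary W : ℓ²(ℕ) ⊗ ℓ²(ℕ) → ⊕_{n=1}^∞ ℂⁿ by W(e_k ⊗ e_i) = e_{i+k−1, i}, where {e_{n,1},...,e_{n,n}} is the standard basis of ℂⁿ. Then W*VW = S ⊗ S*, where V = ⊕ₙ Vₙ with Vₙ the upper shift matrix on ℂⁿ and S the unilateral shift on ℓ²(ℕ). -/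
/-!
Both `W* V W` and `T` are bounded, and `W* V W = T` is equivalent to `V ∘ W = W ∘ T`, so it
suffices to compare the two sides on the basis vectors `e_{(k,i)}`. `W` sends `e_{(k,i)}` to the
`i`-th basis vector of the block `k + i`; `V` moves it to position `i - 1` of the same block, and
`T` sends `e_{(k,i)}` to `e_{(k+1,i-1)}`, which `W` sends to the same block `k + i`. For `i = 0`
both sides vanish.
-/

section BlockShift

variable {𝕜 : Type*} [RCLike 𝕜]
  {V : lp (fun n : ℕ => EuclideanSpace 𝕜 (Fin (n + 1))) 2 →L[𝕜]
    lp (fun n : ℕ => EuclideanSpace 𝕜 (Fin (n + 1))) 2}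
  (hV : ∀ (x : lp (fun n : ℕ => EuclideanSpace 𝕜 (Fin (n + 1))) 2) (n : ℕ) (j : Fin (n + 1)),
    V x n j = if h : (j : ℕ) + 1 < n + 1 then x n ⟨(j : ℕ) + 1, h⟩ else 0)
include hV

theorem blockShift_single_zero (n : ℕ) (c : 𝕜) :
    V (lp.single 2 n (EuclideanSpace.single 0 c)) = 0 := by
  ext m l
  rw [hV]
  by_cases hm : m = n
  · subst hm
    split_ifs
    · simp
    · rfl
  · simp [Pi.single_eq_of_ne hm]

theorem blockShift_single_succ {n j : ℕ} (hj : j + 1 < n + 1) (c : 𝕜) :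
    V (lp.single 2 n (EuclideanSpace.single ⟨j + 1, hj⟩ c))
      = lp.single 2 n (EuclideanSpace.single ⟨j, by omega⟩ c) := by
  ext m l
  rw [hV]
  by_cases hm : m = n
  · subst hm
    split_ifs <;> simp [PiLp.single_apply, Fin.ext_iff]
    omega
  · simp [Pi.single_eq_of_ne hm]

end BlockShift

section ShiftTensorAdjoint

variable {𝕜 : Type*} [RCLike 𝕜] {T : lp (fun _ : ℕ × ℕ => 𝕜) 2 →L[𝕜] lp (fun _ : ℕ × ℕ => 𝕜) 2}
  (hT0 : ∀ (x : lp (fun _ : ℕ × ℕ => 𝕜) 2) (i : ℕ), T x (0, i) = 0)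
  (hT : ∀ (x : lp (fun _ : ℕ × ℕ => 𝕜) 2) (k i : ℕ), T x (k + 1, i) = x (k, i + 1))
include hT0 hT

theorem shiftTensorAdjoint_single_zero (k : ℕ) (c : 𝕜) : T (lp.single 2 (k, 0) c) = 0 := by
  ext ⟨_ | k', i'⟩ <;> simp [hT0, hT]

theorem shiftTensorAdjoint_single_succ (k i : ℕ) (c : 𝕜) :
    T (lp.single 2 (k, i + 1) c) = lp.single 2 (k + 1, i) c := by
  ext ⟨_ | k', i'⟩ <;> simp [hT0, hT, Pi.single_apply]

end ShiftTensorAdjoint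

/-- Model `ℓ²(ℕ) ⊗ ℓ²(ℕ)` as `ℓ²(ℕ × ℕ)` (with `e_k ⊗ e_i ↦ e_{(k,i)}`, 0-based) and
`⊕ₙ ℂⁿ` as the `ℓ²`-direct sum of the `EuclideanSpace ℂ (Fin (n+1))`. Let `W` be the
unitary determined by `W(e_k ⊗ e_i) = e_{i+k-1, i}` (0-based: `W e_{(k,i)}` is the
`i`-th basis vector of the block of dimension `k+i+1`), let `V = ⊕ₙ Vₙ` be the
blockwise upper shift, and let `T = S ⊗ S*`. Then `W*VW = S ⊗ S*`. -/
theorem stmt14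
    (W : lp (fun _ : ℕ × ℕ => ℂ) 2 ≃ₗᵢ[ℂ]
      lp (fun n : ℕ => EuclideanSpace ℂ (Fin (n + 1))) 2)
    (hW : ∀ k i : ℕ, W (lp.single 2 (k, i) 1)
      = lp.single 2 (k + i)
          (EuclideanSpace.single (⟨i, by omega⟩ : Fin (k + i + 1)) 1))
    (V : lp (fun n : ℕ => EuclideanSpace ℂ (Fin (n + 1))) 2 →L[ℂ]
      lp (fun n : ℕ => EuclideanSpace ℂ (Fin (n + 1))) 2)
    (hV : ∀ (x : lp (fun n : ℕ => EuclideanSpace ℂ (Fin (n + 1))) 2) (n : ℕ)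
        (j : Fin (n + 1)),
      V x n j = if h : (j : ℕ) + 1 < n + 1 then x n ⟨(j : ℕ) + 1, h⟩ else 0)
    (T : lp (fun _ : ℕ × ℕ => ℂ) 2 →L[ℂ] lp (fun _ : ℕ × ℕ => ℂ) 2)
    (hT0 : ∀ (x : lp (fun _ : ℕ × ℕ => ℂ) 2) (i : ℕ), T x (0, i) = 0)
    (hT : ∀ (x : lp (fun _ : ℕ × ℕ => ℂ) 2) (k i : ℕ),
      T x (k + 1, i) = x (k, i + 1)) :
    ∀ x : lp (fun _ : ℕ × ℕ => ℂ) 2, W.symm (V (W x)) = T x := by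
  have hW_of_eq : ∀ (k i n : ℕ) (_ : k + i = n), W (lp.single 2 (k, i) 1)
      = lp.single 2 n (EuclideanSpace.single (⟨i, by omega⟩ : Fin (n + 1)) 1) := by
    rintro k i _ rfl
    exact hW k i
  intro x
  suffices hVW : V.comp (W : _ →L[ℂ] _) = (W : _ →L[ℂ] _).comp T from
    W.symm_apply_eq.2 congr($hVW x)
  refine lp.ext_continuousLinearMap (by norm_num) fun ⟨k, i⟩ => ContinuousLinearMap.ext_ring ?_
  change V (W (lp.single 2 (k, i) 1)) = W (T (lp.single 2 (k, i) 1))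
  cases i with
  | zero =>
    rw [shiftTensorAdjoint_single_zero hT0 hT, map_zero, hW]
    exact blockShift_single_zero hV _ _
  | succ i =>
    rw [shiftTensorAdjoint_single_succ hT0 hT, hW, blockShift_single_succ hV,
      hW_of_eq (k + 1) i (k + (i + 1)) (by omega)]
end

section
/- Let A = B(ℓ²(ℕ)) and let a = S be the unilateral shift, so that a*a = 1 and aa* ≠ 1 (a non-unitary isometry). Then a fails to be strongly clean with a commuting self-adjoint projection: if p ∈ A is a projection with pa = ap, then a − p is not invertible. -/
open ContinuousLinearMap in
/-- The unilateral shift `S` on `ℓ²(ℕ)` is a non-unitary isometry (`S*S = 1`,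
`SS* ≠ 1`), and it fails to be strongly `*`-clean: for every self-adjoint projection
`p` commuting with `S`, the operator `S - p` is not invertible. -/
theorem stmt16 (S : lp (fun _ : ℕ => ℂ) 2 →L[ℂ] lp (fun _ : ℕ => ℂ) 2)
    (hS0 : ∀ x : lp (fun _ : ℕ => ℂ) 2, S x 0 = 0)
    (hS : ∀ (x : lp (fun _ : ℕ => ℂ) 2) (n : ℕ), S x (n + 1) = x n) :
    adjoint S * S = 1 ∧ S * adjoint S ≠ 1 ∧
      ∀ p : lp (fun _ : ℕ => ℂ) 2 →L[ℂ] lp (fun _ : ℕ => ℂ) 2,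
        IsIdempotentElem p → IsSelfAdjoint p → p * S = S * p →
          ¬ IsUnit (S - p) := by
  set H := lp (fun _ : ℕ => ℂ) 2 with hH
  let e : ℕ → H := fun n => lp.single 2 n (1 : ℂ)
  have he_self : ∀ n, e n n = 1 := fun n => lp.single_apply_self 2 n 1
  have he_ne : ∀ n k, k ≠ n → e n k = 0 := fun n k h => lp.single_apply_ne 2 n 1 h
  -- S preserves inner products
  have hisom : ∀ x y : H, (inner ℂ (S x) (S y) : ℂ) = inner ℂ x y := by
    intro x y
    rw [lp.inner_eq_tsum, lp.inner_eq_tsum]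
    have hsum : Summable fun n => (inner ℂ (S x n) (S y n) : ℂ) := lp.summable_inner (S x) (S y)
    rw [Summable.tsum_eq_zero_add hsum]
    simp only [hS0, hS, inner_zero_left, zero_add]
  -- first conjunct
  have h1 : adjoint S * S = 1 := by
    refine ContinuousLinearMap.ext fun x => ?_
    refine ext_inner_left ℂ fun v => ?_
    rw [ContinuousLinearMap.mul_apply, adjoint_inner_right, hisom,
      ContinuousLinearMap.one_apply]
  -- S e n = e (n+1)
  have hSe : ∀ n, S (e n) = e (n + 1) := by
    intro n
    apply lp.ext
    funext k
    cases k with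
    | zero => rw [hS0, he_ne (n+1) 0 (by omega)]
    | succ k =>
      rw [hS]
      by_cases hkn : k = n
      · subst hkn; rw [he_self, he_self]
      · rw [he_ne n k hkn, he_ne (n+1) (k+1) (by omega)]
  -- inner with e n extracts coordinate n
  have hsmul : ∀ (a : ℂ) (y : H) (k : ℕ), (a • y) k = a * y k := by
    intro a y k
    rw [lp.coeFn_smul]
    rfl
  have hcoord : ∀ (n : ℕ) (x : H), (inner ℂ (e n) x : ℂ) = x n := by
    intro n x
    rw [lp.inner_single_left]
    simp [RCLike.inner_apply]
  -- adjoint S is the left shift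
  have hadj : ∀ (x : H) (n : ℕ), adjoint S x n = x (n + 1) := by
    intro x n
    rw [← hcoord n (adjoint S x), adjoint_inner_right, hSe, hcoord]
  refine ⟨h1, ?_, ?_⟩
  · -- S * adjoint S ≠ 1
    intro h
    have := congrArg (fun T : H →L[ℂ] H => T (e 0) 0) h
    simp only [ContinuousLinearMap.mul_apply, ContinuousLinearMap.one_apply] at this
    rw [hS0, he_self] at this
    exact zero_ne_one this
  · intro p hidem hsa hcomm hunit
    have hpadj : adjoint p = p := by
      rw [← ContinuousLinearMap.star_eq_adjoint]; exact hsa.star_eq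
    -- p applied pointwise, via the commutation relation
    have hcomm' : ∀ x : H, p (S x) = S (p x) := by
      intro x
      have := congrArg (fun T : H →L[ℂ] H => T x) hcomm
      simpa [ContinuousLinearMap.mul_apply] using this
    -- adjoint S (e 0) = 0
    have hSadj_e0 : adjoint S (e 0) = 0 := by
      apply lp.ext
      funext k
      rw [hadj, he_ne 0 (k+1) (by omega)]
      rfl
    -- S (adjoint S x) coordinates
    have hSSadj : ∀ (x : H) (n : ℕ), S (adjoint S x) (n + 1) = x (n + 1) := by
      intro x n; rw [hS, hadj]
    -- p commutes with adjoint S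
    have hcommadj : ∀ x : H, p (adjoint S x) = adjoint S (p x) := by
      intro x
      have h2 : p * adjoint S = adjoint S * p := by
        have := congrArg star hcomm
        rw [star_mul, star_mul, hsa.star_eq, ContinuousLinearMap.star_eq_adjoint] at this
        exact this.symm
      have := congrArg (fun T : H →L[ℂ] H => T x) h2
      simpa [ContinuousLinearMap.mul_apply] using this
    -- p (e 0) = c • e 0
    set c : ℂ := p (e 0) 0 with hc
    have hpe0 : p (e 0) = c • e 0 := by
      have key : S (adjoint S (p (e 0))) = 0 := by
        rw [← hcommadj, hSadj_e0, map_zero, map_zero]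
      apply lp.ext
      funext k
      cases k with
      | zero =>
        show p (e 0) 0 = (c • e 0) 0
        rw [hsmul, he_self, mul_one]
      | succ k =>
        have h0 : S (adjoint S (p (e 0))) (k + 1) = (0 : H) (k + 1) := by rw [key]
        rw [hSSadj] at h0
        rw [h0, hsmul, he_ne 0 (k+1) (by omega), mul_zero]
        rfl
    -- c is 0 or 1
    have hcc : c * c = c := by
      have h2 : p (p (e 0)) = p (e 0) := by
        have := congrArg (fun T : H →L[ℂ] H => T (e 0)) hidem
        simpa [ContinuousLinearMap.mul_apply] using this
      rw [hpe0, map_smul, hpe0] at h2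
      have h4 := congrArg (fun y : H => y 0) h2
      simp only [hsmul, he_self, mul_one] at h4
      exact h4
    have hc01 : c = 0 ∨ c = 1 := by
      have h5 : c * (c - 1) = 0 := by linear_combination hcc
      rcases mul_eq_zero.mp h5 with h | h
      · exact Or.inl h
      · exact Or.inr (sub_eq_zero.mp h)
    -- p (e n) = c • e n
    have hpen : ∀ n, p (e n) = c • e n := by
      intro n
      induction n with
      | zero => exact hpe0
      | succ n ih => rw [← hSe, hcomm', ih, map_smul, hSe]
    -- p x n = c * x n
    have hpx : ∀ (x : H) (n : ℕ), p x n = c * x n := by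
      intro x n
      have hcr : (starRingEnd ℂ) c = c := by
        rcases hc01 with h | h <;> simp [h]
      have e1 : p x = adjoint p x := by rw [hpadj]
      rw [← hcoord n (p x), e1, adjoint_inner_right, hpen, inner_smul_left, hcr, hcoord]
    -- extract a right inverse
    obtain ⟨u, hu⟩ := hunit
    have hinv : (S - p) ((↑u⁻¹ : H →L[ℂ] H) (e 0)) = e 0 := by
      have h6 : (S - p) * (↑u⁻¹ : H →L[ℂ] H) = 1 := by
        rw [← hu]; exact u.mul_inv
      have := congrArg (fun T : H →L[ℂ] H => T (e 0)) h6
      simpa [ContinuousLinearMap.mul_apply] using this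
    set x : H := (↑u⁻¹ : H →L[ℂ] H) (e 0) with hx
    rcases hc01 with h0 | h1
    · -- p = 0, S x = e 0 impossible at coordinate 0
      have := congrArg (fun y : H => y 0) hinv
      simp only [ContinuousLinearMap.sub_apply, lp.coeFn_sub, Pi.sub_apply] at this
      rw [hS0, hpx, h0, he_self] at this
      simp at this
    · -- p = 1, (S - 1) x = e 0 forces x n = -1 for all n
      have hco : ∀ n, S x n - x n = e 0 n := by
        intro n
        have := congrArg (fun y : H => y n) hinv
        simp only [ContinuousLinearMap.sub_apply, lp.coeFn_sub, Pi.sub_apply] at this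
        rw [hpx, h1, one_mul] at this
        exact this
      have hxn : ∀ n, x n = -1 := by
        intro n
        induction n with
        | zero =>
          have h7 := hco 0
          rw [hS0, he_self] at h7
          linear_combination -h7
        | succ n ih =>
          have h7 := hco (n + 1)
          rw [hS, he_ne 0 (n+1) (by omega)] at h7
          rw [← ih]
          linear_combination -h7
      -- contradiction with square-summability
      have hsum : Summable fun n : ℕ => ‖x n‖ ^ (2 : ENNReal).toReal :=
        (lp.memℓp x).summable (by norm_num)
      have heq : (fun n : ℕ => ‖x n‖ ^ (2 : ENNReal).toReal) = fun _ : ℕ => (1 : ℝ) := by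
        funext n
        rw [hxn n]
        norm_num
      rw [heq, summable_const_iff] at hsum
      exact one_ne_zero hsum
end
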